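/- arXiv:math/9502220 — 10 statements merged into one kernel-verified Lean document; each statement's English description precedes it below -/
import Mathlib

section
/- Let p : ℕ → ℚ[X] satisfy p 0 = C c for some constant c : ℚ, and suppose that for every n ≥ 1 the derivative of p n equals n • p (n-1). Then for every n, p n = Σ_{k=0}^{n} (n.choose k : ℚ) * ((p k).coeff 0) • X^(n-k). -/
open Polynomial Finset

theorem appell_explicit_formula (p : ℕ → ℚ[X]) (c : ℚ) (h0 : p 0 = C c)
    (hD : ∀ n : ℕ, 1 ≤ n → Polynomial.derivative (p n) = n • p (n - 1)) :
    ∀ n : ℕ, p n = ∑ k ∈ Finset.range (n + 1),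
      ((n.choose k : ℚ) * (p k).coeff 0) • X ^ (n - k) := by
  intro n
  induction n with
  | zero => simp [h0, Polynomial.smul_eq_C_mul]
  | succ n ih =>
    set q : ℚ[X] := ∑ k ∈ Finset.range (n + 1 + 1),
      (((n+1).choose k : ℚ) * (p k).coeff 0) • X ^ (n + 1 - k) with hq
    have hder : Polynomial.derivative (p (n+1)) = Polynomial.derivative q := by
      rw [hD (n+1) (by omega)]
      simp only [Nat.add_sub_cancel]
      rw [hq, map_sum]
      rw [Finset.sum_range_succ]
      have hlast : Polynomial.derivative
          ((((n+1).choose (n+1) : ℚ) * (p (n+1)).coeff 0) • (X : ℚ[X]) ^ (n + 1 - (n+1))) = 0 := by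
        simp
      rw [hlast, add_zero, ih, Finset.smul_sum]
      refine Finset.sum_congr rfl ?_
      intro k hk
      rw [Finset.mem_range] at hk
      rw [derivative_smul, derivative_X_pow]
      have h1 : n + 1 - k - 1 = n - k := by omega
      have h2 : ((n+1).choose k : ℚ) * ((n + 1 - k : ℕ) : ℚ) = ((n + 1 : ℕ) : ℚ) * n.choose k := by
        rw [← Nat.cast_mul, ← Nat.cast_mul, mul_comm ((n+1) : ℕ) (n.choose k),
          Nat.choose_mul_succ_eq]
      rw [h1, ← Nat.cast_smul_eq_nsmul ℚ, ← smul_eq_C_mul, smul_smul, smul_smul]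
      congr 1
      push_cast [Nat.cast_sub (by omega : k ≤ n + 1)] at h2 ⊢
      linear_combination -((p k).coeff 0) * h2
    have hzero : Polynomial.derivative (p (n+1) - q) = 0 := by
      rw [map_sub, hder, sub_self]
    have hc : p (n+1) - q = C ((p (n+1) - q).coeff 0) :=
      Polynomial.eq_C_of_derivative_eq_zero hzero
    have hcoeff : (p (n+1)).coeff 0 = q.coeff 0 := by
      rw [hq]
      rw [Polynomial.finset_sum_coeff]
      rw [Finset.sum_eq_single (n+1)]
      · simp
      · intro k hk hkne
        rw [Finset.mem_range] at hk
        simp only [coeff_smul, coeff_X_pow]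
        rw [if_neg (by omega)]
        simp
      · intro h
        simp at h
    have : p (n+1) - q = 0 := by
      rw [hc, coeff_sub, hcoeff, sub_self, map_zero]
    exact sub_eq_zero.mp this
end

section
/- For every polynomial p : ℝ[X], every x : ℝ and every natural number n, Σ_{j=0}^{n} p.eval (x + j) = (∫ t in x..(x+n+1), p.eval t) + Σ_{k=1}^{p.natDegree + 1} ((bernoulli k : ℝ) / k!) * ((Polynomial.derivative^[k-1] p).eval (x+n+1) - (Polynomial.derivative^[k-1] p).eval x), where bernoulli k denotes the k-th Bernoulli number with bernoulli 1 = -1/2. -/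
open Polynomial Finset

-- evaluation of the (rational) Bernoulli polynomial at a real number
lemma bern_aeval_real (m : ℕ) (y : ℝ) :
    (Polynomial.aeval y) (Polynomial.bernoulli m)
      = ∑ i ∈ range (m + 1), (_root_.bernoulli i : ℝ) * (m.choose i : ℝ) * y ^ (m - i) := by
  rw [Polynomial.bernoulli, map_sum]
  refine Finset.sum_congr rfl fun i _ => ?_
  rw [aeval_monomial, eq_ratCast (algebraMap ℚ ℝ)]
  push_cast
  ring

lemma bern_comp_id (m : ℕ) :
    (Polynomial.bernoulli m).comp (X + 1) =
      Polynomial.bernoulli m + Polynomial.C (m : ℚ) * X ^ (m - 1) := by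
  apply Polynomial.funext
  intro z
  rw [eval_comp]
  simp only [eval_add, eval_mul, eval_C, eval_X, eval_pow, eval_one]
  rw [add_comm z 1, Polynomial.bernoulli_eval_one_add]

lemma bern_diff_real (m : ℕ) (y : ℝ) :
    (Polynomial.aeval (y + 1)) (Polynomial.bernoulli m)
      - (Polynomial.aeval y) (Polynomial.bernoulli m) = (m : ℝ) * y ^ (m - 1) := by
  have h := congrArg (Polynomial.aeval y (R := ℚ) (A := ℝ)) (bern_comp_id m)
  rw [Polynomial.aeval_comp] at h
  simp only [map_add, map_mul, map_pow, aeval_X, aeval_C, aeval_one] at h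
  rw [h]
  push_cast
  ring

lemma step_monomial (c : ℝ) (m N : ℕ) (hmN : m ≤ N) (y : ℝ) :
    ∑ k ∈ range (N + 1), (_root_.bernoulli k : ℝ) / (k.factorial : ℝ) *
        ((Polynomial.derivative^[k] (monomial m c : ℝ[X])).eval (y + 1)
          - (Polynomial.derivative^[k] (monomial m c : ℝ[X])).eval y)
      = (Polynomial.derivative (monomial m c : ℝ[X])).eval y := by
  have hterm : ∀ k : ℕ,
      (_root_.bernoulli k : ℝ) / (k.factorial : ℝ) *
        ((Polynomial.derivative^[k] (monomial m c : ℝ[X])).eval (y + 1)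
          - (Polynomial.derivative^[k] (monomial m c : ℝ[X])).eval y)
      = c * ((_root_.bernoulli k : ℝ) * (m.choose k : ℝ) * ((y + 1) ^ (m - k) - y ^ (m - k))) := by
    intro k
    rw [← C_mul_X_pow_eq_monomial, Polynomial.iterate_derivative_C_mul,
      Polynomial.iterate_derivative_X_pow_eq_smul]
    simp only [eval_mul, eval_C, eval_smul, eval_pow, eval_X, smul_eq_mul,
      Nat.descFactorial_eq_factorial_mul_choose]
    have hk : (k.factorial : ℝ) ≠ 0 := by exact_mod_cast k.factorial_ne_zero
    push_cast
    field_simp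
  simp only [hterm]
  rw [← Finset.mul_sum]
  rw [← Finset.sum_subset (Finset.range_subset_range.2 (by omega) :
      range (m + 1) ⊆ range (N + 1))
    (fun k _ hk => by
      have : m < k := by simpa using hk
      simp [Nat.choose_eq_zero_of_lt this])]
  have := bern_diff_real m y
  rw [bern_aeval_real, bern_aeval_real, ← Finset.sum_sub_distrib] at this
  have hsum : ∑ i ∈ range (m + 1),
      (_root_.bernoulli i : ℝ) * (m.choose i : ℝ) * ((y + 1) ^ (m - i) - y ^ (m - i))
      = (m : ℝ) * y ^ (m - 1) := by
    rw [← this]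
    exact Finset.sum_congr rfl fun i _ => by ring
  rw [hsum, derivative_monomial, eval_monomial]
  ring

lemma step_poly (Q : ℝ[X]) (N : ℕ) (hN : Q.natDegree ≤ N) (y : ℝ) :
    (Polynomial.derivative Q).eval y
      = ∑ k ∈ range (N + 1), (_root_.bernoulli k : ℝ) / (k.factorial : ℝ) *
          ((Polynomial.derivative^[k] Q).eval (y + 1)
            - (Polynomial.derivative^[k] Q).eval y) := by
  conv_lhs => rw [Q.as_sum_range]
  conv_rhs => rw [Q.as_sum_range]
  have hiter : ∀ (k : ℕ) (s : Finset ℕ) (f : ℕ → ℝ[X]),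
      Polynomial.derivative^[k] (∑ i ∈ s, f i) = ∑ i ∈ s, Polynomial.derivative^[k] (f i) := by
    intro k s f
    induction k with
    | zero => simp
    | succ k ih =>
        rw [Function.iterate_succ_apply', ih, derivative_sum]
        simp [Function.iterate_succ_apply']
  simp only [hiter, derivative_sum, eval_finset_sum, ← Finset.sum_sub_distrib, Finset.mul_sum]
  rw [Finset.sum_comm]
  refine Finset.sum_congr rfl fun i hi => ?_
  have him : i ≤ N := le_trans (by simpa using Nat.lt_succ_iff.mp (mem_range.mp hi)) hN
  exact (step_monomial (Q.coeff i) i N him y).symm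

lemma single_step (p : ℝ[X]) (y : ℝ) :
    p.eval y = (∫ t in y..(y + 1), p.eval t) +
      ∑ k ∈ Finset.Icc 1 (p.natDegree + 1),
        ((_root_.bernoulli k : ℝ) / (k.factorial : ℝ)) *
          ((Polynomial.derivative^[k - 1] p).eval (y + 1)
            - (Polynomial.derivative^[k - 1] p).eval y) := by
  set P : ℝ[X] := ∑ i ∈ range (p.natDegree + 1), monomial (i + 1) (p.coeff i / (i + 1)) with hPdef
  have hP : Polynomial.derivative P = p := by
    rw [hPdef, derivative_sum]
    conv_rhs => rw [p.as_sum_range]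
    refine Finset.sum_congr rfl fun i _ => ?_
    rw [derivative_monomial]
    congr 1
    have : ((i : ℝ) + 1) ≠ 0 := by positivity
    push_cast
    field_simp
  have hdeg : P.natDegree ≤ p.natDegree + 1 := by
    refine Polynomial.natDegree_sum_le_of_forall_le _ _ fun i hi => ?_
    refine le_trans (Polynomial.natDegree_monomial_le _) ?_
    have := mem_range.mp hi
    omega
  have hInt : (∫ t in y..(y + 1), p.eval t) = P.eval (y + 1) - P.eval y := by
    refine intervalIntegral.integral_eq_sub_of_hasDerivAt (f := fun s => P.eval s)
      (fun t _ => ?_) ?_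
    · simpa [hP] using P.hasDerivAt t
    · exact (Polynomial.continuous p).intervalIntegrable _ _
  have key := step_poly P (p.natDegree + 1) hdeg y
  rw [hP] at key
  rw [key, Finset.sum_range_succ']
  have h0 : (_root_.bernoulli 0 : ℝ) / ((0 : ℕ).factorial : ℝ) *
      ((Polynomial.derivative^[0] P).eval (y + 1) - (Polynomial.derivative^[0] P).eval y)
      = P.eval (y + 1) - P.eval y := by simp
  rw [h0, hInt, add_comm]
  congr 1
  rw [show Finset.Icc 1 (p.natDegree + 1) = Finset.Ico 1 (p.natDegree + 2) from
    (Finset.Ico_add_one_right_eq_Icc ..).symm, Finset.sum_Ico_eq_sum_range]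
  refine Finset.sum_congr (by norm_num) fun i _ => ?_
  have : Polynomial.derivative^[i + 1] P = Polynomial.derivative^[i] p := by
    rw [Function.iterate_succ_apply, hP]
  rw [add_comm 1 i]
  simp [this]

theorem euler_maclaurin_polynomial (p : ℝ[X]) (x : ℝ) (n : ℕ) :
    ∑ j ∈ Finset.range (n + 1), p.eval (x + j) =
      (∫ t in x..(x + n + 1), p.eval t) +
        ∑ k ∈ Finset.Icc 1 (p.natDegree + 1),
          ((bernoulli k : ℝ) / (k.factorial : ℝ)) *
            ((Polynomial.derivative^[k - 1] p).eval (x + n + 1)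
              - (Polynomial.derivative^[k - 1] p).eval x) := by
  induction n with
  | zero =>
      simpa using single_step p x
  | succ n ih =>
      rw [Finset.sum_range_succ, ih]
      have hstep := single_step p (x + n + 1)
      have hint : (∫ t in x..(x + (n + 1) + 1), p.eval t)
          = (∫ t in x..(x + n + 1), p.eval t) + ∫ t in (x + n + 1)..(x + n + 1 + 1), p.eval t := by
        rw [intervalIntegral.integral_add_adjacent_intervals
          ((Polynomial.continuous p).intervalIntegrable _ _)
          ((Polynomial.continuous p).intervalIntegrable _ _)]
        push_cast
        ring_nf
      have hsum : ∑ k ∈ Finset.Icc 1 (p.natDegree + 1),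
            ((bernoulli k : ℝ) / (k.factorial : ℝ)) *
              ((Polynomial.derivative^[k - 1] p).eval (x + (n + 1) + 1)
                - (Polynomial.derivative^[k - 1] p).eval x)
          = (∑ k ∈ Finset.Icc 1 (p.natDegree + 1),
              ((bernoulli k : ℝ) / (k.factorial : ℝ)) *
                ((Polynomial.derivative^[k - 1] p).eval (x + n + 1)
                  - (Polynomial.derivative^[k - 1] p).eval x))
            + ∑ k ∈ Finset.Icc 1 (p.natDegree + 1),
              ((bernoulli k : ℝ) / (k.factorial : ℝ)) *
                ((Polynomial.derivative^[k - 1] p).eval (x + n + 1 + 1)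
                  - (Polynomial.derivative^[k - 1] p).eval (x + n + 1)) := by
        rw [← Finset.sum_add_distrib]
        refine Finset.sum_congr rfl fun k _ => ?_
        push_cast
        ring
      have hx : x + ((n : ℝ) + 1) = x + n + 1 := by ring
      push_cast [hx] at *
      rw [hint, hsum]
      rw [hstep]
      ring
end

section
/- For every polynomial p : ℝ[X], p = Σ_{n=0}^{p.natDegree} ((∫ t in (0:ℝ)..1, (Polynomial.derivative^[n] p).eval t) / n!) • ((Polynomial.bernoulli n).map (algebraMap ℚ ℝ)). -/
open Polynomial Finset

noncomputable def bcL (n : ℕ) : ℝ[X] →ₗ[ℝ] ℝ where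
  toFun p := (∫ t in (0:ℝ)..1, (Polynomial.derivative^[n] p).eval t) / (n.factorial : ℝ)
  map_add' p q := by
    simp only [iterate_map_add, eval_add]
    rw [intervalIntegral.integral_add ((derivative^[n] p).continuous.intervalIntegrable _ _)
      ((derivative^[n] q).continuous.intervalIntegrable _ _)]
    ring
  map_smul' c p := by
    simp only [iterate_derivative_smul, eval_smul, smul_eq_mul, RingHom.id_apply]
    rw [intervalIntegral.integral_const_mul]
    ring

lemma nat_identity {n k : ℕ} (h : n ≤ k) :
    k.descFactorial n * (k + 1) = (k + 1).choose n * n.factorial * (k - n + 1) := by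
  have h1 := Nat.factorial_mul_descFactorial h
  have h2 := Nat.factorial_mul_descFactorial (Nat.le_succ_of_le h)
  have e : k + 1 - n = k - n + 1 := by omega
  rw [e] at h2
  have : (k+1).choose n * n.factorial = (k+1).descFactorial n := by
    rw [Nat.descFactorial_eq_factorial_mul_choose]; ring
  rw [this]
  have hpos : 0 < (k - n).factorial := Nat.factorial_pos _
  apply Nat.eq_of_mul_eq_mul_left hpos
  calc (k-n).factorial * (k.descFactorial n * (k+1))
      = ((k-n).factorial * k.descFactorial n) * (k+1) := by ring
    _ = (k+1).factorial := by rw [h1, Nat.factorial_succ]; ring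
    _ = (k-n).factorial * ((k+1).descFactorial n * (k - n + 1)) := by
        rw [← h2, Nat.factorial_succ]; ring

lemma bcL_X_pow_le {n k : ℕ} (h : n ≤ k) :
    bcL n (X ^ k : ℝ[X]) = ((k+1).choose n : ℝ) / (k+1) := by
  obtain ⟨m, rfl⟩ := Nat.exists_eq_add_of_le h
  simp only [bcL, LinearMap.coe_mk, AddHom.coe_mk]
  rw [iterate_derivative_X_pow_eq_natCast_mul]
  simp only [eval_mul, eval_natCast, eval_pow, eval_X, Nat.add_sub_cancel_left]
  rw [intervalIntegral.integral_const_mul, integral_pow]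
  have hid := nat_identity h
  rw [Nat.add_sub_cancel_left] at hid
  have hn : (n.factorial : ℝ) ≠ 0 := by positivity
  have hm : ((m:ℝ) + 1) ≠ 0 := by positivity
  have hk : ((n:ℝ) + (m:ℝ) + 1) ≠ 0 := by positivity
  have hid' : ((n+m).descFactorial n : ℝ) * ((n:ℝ)+(m:ℝ)+1)
      = ((n+m+1).choose n : ℝ) * (n.factorial : ℝ) * ((m:ℝ)+1) := by exact_mod_cast hid
  push_cast
  field_simp
  rw [one_pow, zero_pow (Nat.succ_ne_zero m), sub_zero, mul_one]
  nlinarith [hid']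

lemma bcL_X_pow_gt {n k : ℕ} (h : k < n) : bcL n (X ^ k : ℝ[X]) = 0 := by
  have : derivative^[n] (X ^ k : ℝ[X]) = 0 := by
    apply iterate_derivative_eq_zero
    simpa using h
  simp [bcL, this]

lemma monomial_expansion (k N : ℕ) (h : k ≤ N) :
    (X ^ k : ℝ[X]) = ∑ n ∈ Finset.range (N+1),
      bcL n (X ^ k) • ((Polynomial.bernoulli n).map (algebraMap ℚ ℝ)) := by
  rw [← Finset.sum_subset (Finset.range_subset_range.2 (by omega) : Finset.range (k+1) ⊆ Finset.range (N+1))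
    (fun n _ hn => by rw [bcL_X_pow_gt (by simpa using hn), zero_smul])]
  have hmap := congrArg (Polynomial.map (algebraMap ℚ ℝ)) (Polynomial.sum_bernoulli k)
  rw [Polynomial.map_sum, Polynomial.map_monomial] at hmap
  simp only [smul_eq_C_mul, Polynomial.map_mul, Polynomial.map_C] at hmap
  have hk : ((k:ℝ) + 1) ≠ 0 := by positivity
  calc (X ^ k : ℝ[X])
      = ((k:ℝ)+1)⁻¹ • (monomial k ((k:ℝ)+1)) := by
        rw [← smul_X_eq_monomial, smul_smul, inv_mul_cancel₀ hk, one_smul]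
    _ = ∑ n ∈ Finset.range (k+1),
          bcL n (X ^ k) • ((Polynomial.bernoulli n).map (algebraMap ℚ ℝ)) := by
        rw [show ((algebraMap ℚ ℝ) ((k:ℚ)+1)) = ((k:ℝ)+1) by push_cast; simp] at hmap
        rw [← hmap, Finset.smul_sum]
        refine Finset.sum_congr rfl fun n hn => ?_
        rw [bcL_X_pow_le (Finset.mem_range_succ_iff.mp hn), ← smul_eq_C_mul, smul_smul]
        rw [div_eq_inv_mul]
        norm_num

theorem bernoulli_taylor_expansion (p : ℝ[X]) :
    p = ∑ n ∈ Finset.range (p.natDegree + 1),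
      ((∫ t in (0:ℝ)..1, (Polynomial.derivative^[n] p).eval t) / (n.factorial : ℝ)) •
        ((Polynomial.bernoulli n).map (algebraMap ℚ ℝ)) := by
  have hrw : ∀ n, ((∫ t in (0:ℝ)..1, (Polynomial.derivative^[n] p).eval t) / (n.factorial : ℝ))
      = bcL n p := fun n => rfl
  simp_rw [hrw]
  set d := p.natDegree with hd
  have hp : p = ∑ k ∈ Finset.range (d+1), p.coeff k • (X:ℝ[X]) ^ k := by
    conv_lhs => rw [p.as_sum_range' (d+1) (by omega)]
    exact Finset.sum_congr rfl fun k _ => (smul_X_eq_monomial).symm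
  have main : ∑ k ∈ Finset.range (d+1), p.coeff k • (X:ℝ[X]) ^ k
      = ∑ n ∈ Finset.range (d+1), bcL n p • ((Polynomial.bernoulli n).map (algebraMap ℚ ℝ)) := by
    calc ∑ k ∈ Finset.range (d+1), p.coeff k • (X:ℝ[X]) ^ k
        = ∑ k ∈ Finset.range (d+1), p.coeff k •
            ∑ n ∈ Finset.range (d+1), bcL n ((X:ℝ[X]) ^ k) •
              ((Polynomial.bernoulli n).map (algebraMap ℚ ℝ)) := by
          refine Finset.sum_congr rfl fun k hk => ?_
          rw [← monomial_expansion k d (Finset.mem_range_succ_iff.mp hk)]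
      _ = ∑ n ∈ Finset.range (d+1), bcL n p •
            ((Polynomial.bernoulli n).map (algebraMap ℚ ℝ)) := by
          simp_rw [Finset.smul_sum, smul_smul]
          rw [Finset.sum_comm]
          refine Finset.sum_congr rfl fun n _ => ?_
          rw [← Finset.sum_smul]
          congr 1
          conv_rhs => rw [hp]
          rw [map_sum]
          simp
  conv_lhs => rw [hp]
  exact main
end

section
/- For every natural number n and all x, z : ℚ, ((Polynomial.hermite n).map (algebraMap ℤ ℚ)).eval (x + z) = Σ_{k=0}^{n} (n.choose k : ℚ) * z^k * ((Polynomial.hermite (n-k)).map (algebraMap ℤ ℚ)).eval x. -/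
open Polynomial Finset

private lemma deriv_hermiteZ (n : ℕ) :
    derivative (Polynomial.hermite n) = n • Polynomial.hermite (n - 1) := by
  induction n with
  | zero => simp [hermite_zero]
  | succ n ih =>
      rw [hermite_succ, derivative_sub, derivative_mul, derivative_X, ih, derivative_smul]
      cases n with
      | zero => simp [hermite_zero]
      | succ m =>
          simp only [Nat.add_sub_cancel, one_mul]
          have : X * ((m + 1) • Polynomial.hermite m) - (m + 1) • derivative (hermite m)
              = (m + 1) • Polynomial.hermite (m + 1) := by
            rw [hermite_succ, smul_sub, mul_smul_comm]
          rw [add_sub_assoc, this, ← succ_nsmul']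

private lemma derivQ_hermite (n : ℕ) :
    derivative ((Polynomial.hermite n).map (algebraMap ℤ ℚ)) =
      (n : ℚ) • ((Polynomial.hermite (n - 1)).map (algebraMap ℤ ℚ)) := by
  rw [derivative_map, deriv_hermiteZ]
  simp [← Nat.cast_smul_eq_nsmul ℚ, smul_eq_C_mul, C_eq_natCast]

private lemma iter_derivQ_hermite (n k : ℕ) :
    (derivative (R := ℚ))^[k] ((Polynomial.hermite n).map (algebraMap ℤ ℚ)) =
      (n.descFactorial k : ℚ) • ((Polynomial.hermite (n - k)).map (algebraMap ℤ ℚ)) := by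
  induction k with
  | zero => simp
  | succ k ih =>
      rw [Function.iterate_succ_apply', ih, derivative_smul, derivQ_hermite,
        Nat.descFactorial_succ, smul_smul, ← Nat.sub_sub]
      push_cast
      ring_nf

private lemma hasseDerivQ_hermite (n k : ℕ) :
    hasseDeriv k ((Polynomial.hermite n).map (algebraMap ℤ ℚ)) =
      (n.choose k : ℚ) • ((Polynomial.hermite (n - k)).map (algebraMap ℤ ℚ)) := by
  have h := congrFun (factorial_smul_hasseDeriv (R := ℚ) k)
    ((Polynomial.hermite n).map (algebraMap ℤ ℚ))
  rw [iter_derivQ_hermite, Nat.descFactorial_eq_factorial_mul_choose] at h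
  simp only [Pi.smul_apply, LinearMap.smul_apply, ← Nat.cast_smul_eq_nsmul ℚ] at h
  push_cast at h
  rw [mul_smul] at h
  exact smul_right_injective _ (by positivity : (k.factorial : ℚ) ≠ 0) h

theorem hermite_appell_shift (n : ℕ) (x z : ℚ) :
    ((Polynomial.hermite n).map (algebraMap ℤ ℚ)).eval (x + z) =
      ∑ k ∈ Finset.range (n + 1),
        (n.choose k : ℚ) * z ^ k *
          ((Polynomial.hermite (n - k)).map (algebraMap ℤ ℚ)).eval x := by
  have hdeg : ((Polynomial.hermite n).map (algebraMap ℤ ℚ)).natDegree = n := by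
    rw [natDegree_map_eq_of_injective (algebraMap ℤ ℚ).injective_int, natDegree_hermite]
  rw [add_comm x z, ← taylor_eval,
    eval_eq_sum_range' (n := n + 1) (by rw [natDegree_taylor, hdeg]; omega)]
  refine Finset.sum_congr rfl fun k _ => ?_
  rw [taylor_coeff, hasseDerivQ_hermite, eval_smul, smul_eq_mul]
  ring
end

section
/- For every natural number n, Polynomial.hermite n = Σ_{k=0}^{n} (n.choose k : ℤ) * ((Polynomial.hermite k).coeff 0) • X^(n-k), i.e. He_n(x) = Σ_k C(n,k) He_k(0) x^{n-k} where He_k(0) are the Hermite numbers. -/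
open Polynomial Finset

theorem hermite_appell_formula (n : ℕ) :
    Polynomial.hermite n =
      ∑ k ∈ Finset.range (n + 1),
        ((n.choose k : ℤ) * (Polynomial.hermite k).coeff 0) • X ^ (n - k) := by
  ext j
  rw [finset_sum_coeff]
  simp only [coeff_smul, coeff_X_pow, smul_eq_mul, mul_ite, mul_one, mul_zero]
  rcases le_or_gt j n with hj | hj
  · rw [Finset.sum_eq_single (n - j)]
    · rw [if_pos (by omega), coeff_hermite, coeff_hermite, Nat.choose_symm hj]
      have hpar : Even (n + j) ↔ Even (n - j + 0) := by
        simp only [Nat.add_zero, Nat.even_sub hj, Nat.even_add]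
      by_cases h : Even (n + j)
      · rw [if_pos h, if_pos (hpar.1 h)]
        simp only [Nat.sub_zero, Nat.choose_zero_right, Nat.cast_one, mul_one]
        ring
      · rw [if_neg h, if_neg (fun hc => h (hpar.2 hc)), mul_zero]
    · intro k hk hne
      rw [if_neg]
      simp only [Finset.mem_range] at hk
      omega
    · intro h
      exact absurd (Finset.mem_range.2 (by omega)) h
  · rw [coeff_hermite_of_lt hj, Finset.sum_eq_zero]
    intro k hk
    simp only [Finset.mem_range] at hk
    rw [if_neg (by omega)]
end

section
/- For every polynomial p : ℚ[X], p = Σ_{n=0}^{p.natDegree} c_n • ((Polynomial.hermite n).map (algebraMap ℤ ℚ)), where c_n = (1/n!) * Σ_{j=0}^{p.natDegree} (1/((2:ℚ)^j * j!)) * ((Polynomial.derivative^[n + 2*j] p).eval 0). -/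
open Polynomial Finset
open scoped Nat

theorem deriv_hermite : ∀ n : ℕ, derivative (hermite n) = (n : ℤ[X]) * hermite (n - 1)
  | 0 => by simp [hermite_zero]
  | 1 => by simp [hermite_one, hermite_zero]
  | (n+2) => by
    rw [show n+2-1 = n+1 from rfl, hermite_succ (n+1), derivative_sub, derivative_mul, derivative_X, one_mul,
      deriv_hermite (n+1), Nat.add_sub_cancel, derivative_mul, hermite_succ n]
    simp only [derivative_natCast, zero_mul, Nat.add_sub_cancel]
    push_cast
    ring

theorem iter_deriv_hermite (m k : ℕ) :
    derivative^[k] (hermite m) = (m.descFactorial k : ℤ[X]) * hermite (m - k) := by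
  induction k with
  | zero => simp
  | succ k ih =>
    rw [Function.iterate_succ_apply', ih, derivative_mul, deriv_hermite (m - k),
      derivative_natCast, zero_mul, zero_add, Nat.descFactorial_succ, Nat.sub_sub]
    push_cast
    ring

noncomputable def Hq (n : ℕ) : ℚ[X] := (hermite n).map (algebraMap ℤ ℚ)

noncomputable def cf (N n : ℕ) (p : ℚ[X]) : ℚ :=
  (1 / (n.factorial : ℚ)) *
    ∑ j ∈ Finset.range (N + 1),
      (1 / ((2:ℚ) ^ j * (j.factorial : ℚ))) * (Polynomial.derivative^[n + 2 * j] p).eval 0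

theorem cf_add (N n : ℕ) (p q : ℚ[X]) : cf N n (p + q) = cf N n p + cf N n q := by
  simp only [cf, iterate_map_add, eval_add, mul_add, Finset.sum_add_distrib]

theorem cf_smul (N n : ℕ) (a : ℚ) (p : ℚ[X]) : cf N n (a • p) = a * cf N n p := by
  simp only [cf, iterate_derivative_smul, eval_smul, smul_eq_mul]
  rw [show ∑ j ∈ Finset.range (N + 1),
      (1 / ((2:ℚ) ^ j * (j.factorial : ℚ))) * (a * (Polynomial.derivative^[n + 2 * j] p).eval 0)
      = a * ∑ j ∈ Finset.range (N + 1),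
      (1 / ((2:ℚ) ^ j * (j.factorial : ℚ))) * (Polynomial.derivative^[n + 2 * j] p).eval 0 by
    rw [Finset.mul_sum]; exact Finset.sum_congr rfl fun j _ => by ring]
  ring

theorem eval_iter_Hq (m k : ℕ) :
    (derivative^[k] (Hq m)).eval 0 =
      ((m.descFactorial k * (hermite (m - k)).coeff 0 : ℤ) : ℚ) := by
  rw [Hq, iterate_derivative_map, iter_deriv_hermite, ← coeff_zero_eq_eval_zero, coeff_map]
  simp [coeff_natCast_mul]

theorem doubleFac_odd (t : ℕ) : 2^t * t.factorial * (2*t-1)‼ = (2*t).factorial := by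
  cases t with
  | zero => simp [Nat.doubleFactorial]
  | succ t =>
    rw [show 2*(t+1)-1 = 2*t+1 by omega, ← Nat.doubleFactorial_two_mul,
      show 2*(t+1) = 2*t+1+1 by ring, ← Nat.factorial_eq_mul_doubleFactorial]

theorem alt_sum (s : ℕ) (hs : s ≠ 0) :
    ∑ j ∈ Finset.range (s+1), (-1:ℚ)^(s-j) * (s.choose j) = 0 := by
  have h : ∑ j ∈ Finset.range (s+1), ((-1:ℚ)^j * (s.choose j)) = 0 := by
    exact_mod_cast Int.alternating_sum_range_choose_of_ne hs
  calc ∑ j ∈ Finset.range (s+1), (-1:ℚ)^(s-j) * (s.choose j)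
      = ∑ j ∈ Finset.range (s+1), (-1:ℚ)^s * ((-1)^j * (s.choose j)) := by
        refine Finset.sum_congr rfl fun j hj => ?_
        have hj' : j ≤ s := by simpa [Nat.lt_succ_iff] using hj
        have h1 : (-1:ℚ)^(s-j) * (-1)^j = (-1)^s := by
          rw [← pow_add]; congr 1; omega
        have h2 : ((-1:ℚ)^j) * ((-1)^j) = 1 := by
          rw [← pow_add, ← two_mul, pow_mul]; norm_num
        rw [← h1]
        linear_combination (-(-1:ℚ)^(s-j) * (s.choose j)) * h2
    _ = (-1:ℚ)^s * ∑ j ∈ Finset.range (s+1), ((-1:ℚ)^j * (s.choose j)) := by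
        rw [Finset.mul_sum]
    _ = 0 := by rw [h, mul_zero]

theorem coeff_herm_zero (t : ℕ) : (hermite (2*t)).coeff 0 = (-1)^t * (2*t-1)‼ := by
  simpa using coeff_hermite_explicit t 0

theorem cf_Hq {N n m : ℕ} (hm : m ≤ N) : cf N n (Hq m) = if n = m then 1 else 0 := by
  simp only [cf, eval_iter_Hq]
  by_cases h : n = m
  · subst h
    rw [if_pos rfl, Finset.sum_eq_single_of_mem 0 (Finset.mem_range.mpr (Nat.succ_pos N))]
    · have : n - (n + 2*0) = 0 := by omega
      simp [this, Nat.descFactorial_self, coeff_hermite_self]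
      exact inv_mul_cancel₀ (by exact_mod_cast n.factorial_ne_zero)
    · intro j _ hj
      have : n.descFactorial (n + 2*j) = 0 :=
        Nat.descFactorial_eq_zero_iff_lt.mpr (by omega)
      simp [this]
  · rw [if_neg h]
    have hS : ∑ j ∈ Finset.range (N + 1),
        (1 / ((2:ℚ) ^ j * (j.factorial : ℚ))) *
          ((m.descFactorial (n + 2*j) * (hermite (m - (n + 2*j))).coeff 0 : ℤ) : ℚ) = 0 := by
      rcases Nat.lt_or_ge m n with hlt | hge
      · apply Finset.sum_eq_zero
        intro j _
        have : m.descFactorial (n + 2*j) = 0 :=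
          Nat.descFactorial_eq_zero_iff_lt.mpr (by omega)
        simp [this]
      · have hnm : n < m := lt_of_le_of_ne hge h
        by_cases hev : Even (m - n)
        · obtain ⟨s, hs⟩ := hev
          have hs0 : s ≠ 0 := by omega
          have hsub : Finset.range (s+1) ⊆ Finset.range (N+1) := by
            apply Finset.range_subset_range.mpr; omega
          rw [← Finset.sum_subset hsub]
          · have : ∀ j ∈ Finset.range (s+1),
                (1 / ((2:ℚ) ^ j * (j.factorial : ℚ))) *
                  ((m.descFactorial (n + 2*j) * (hermite (m - (n + 2*j))).coeff 0 : ℤ) : ℚ)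
                = ((m.factorial : ℚ) / ((2:ℚ)^s * (s.factorial : ℚ))) *
                  ((-1:ℚ)^(s-j) * (s.choose j)) := by
              intro j hj
              have hj' : j ≤ s := by simpa [Nat.lt_succ_iff] using hj
              have hmj : m - (n + 2*j) = 2*(s-j) := by omega
              have hle : n + 2*j ≤ m := by omega
              rw [hmj, coeff_herm_zero]
              push_cast
              have e1 : (m.descFactorial (n + 2*j) : ℚ)
                  = (m.factorial : ℚ) / ((2*(s-j)).factorial : ℚ) := by
                rw [eq_div_iff (by exact_mod_cast (2*(s-j)).factorial_ne_zero), mul_comm]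
                have := Nat.factorial_mul_descFactorial hle
                rw [show m - (n + 2*j) = 2*(s-j) from hmj] at this
                exact_mod_cast this
              have e2 : (((2*(s-j)-1)‼ : ℕ) : ℚ)
                  = ((2*(s-j)).factorial : ℚ) / ((2:ℚ)^(s-j) * ((s-j).factorial : ℚ)) := by
                rw [eq_div_iff (by positivity)]
                have := doubleFac_odd (s-j)
                push_cast [← this]
                ring
              have e3 : ((s.choose j : ℕ) : ℚ)
                  = (s.factorial : ℚ) / ((j.factorial : ℚ) * ((s-j).factorial : ℚ)) := by
                rw [eq_div_iff (by positivity)]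
                have := Nat.choose_mul_factorial_mul_factorial hj'
                push_cast [← this]
                ring
              rw [e1, e2, e3]
              have hpow : (2:ℚ)^s = 2^j * 2^(s-j) := by
                rw [← pow_add]; congr 1; omega
              field_simp
              rw [hpow]
            rw [Finset.sum_congr rfl this, ← Finset.mul_sum, alt_sum s hs0, mul_zero]
          · intro j _ hj
            have : m.descFactorial (n + 2*j) = 0 := by
              apply Nat.descFactorial_eq_zero_iff_lt.mpr
              simp only [Finset.mem_range] at hj
              omega
            simp [this]
        · apply Finset.sum_eq_zero
          intro j _
          by_cases hle : n + 2*j ≤ m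
          · have hodd : Odd (m - (n + 2*j) + 0) := by
              rw [Nat.odd_iff] at *
              rw [Nat.even_iff] at hev
              simp only [add_zero]
              omega
            rw [coeff_hermite_of_odd_add hodd]
            simp
          · have : m.descFactorial (n + 2*j) = 0 :=
              Nat.descFactorial_eq_zero_iff_lt.mpr (by omega)
            simp [this]
    rw [hS, mul_zero]

theorem cf_zero (N n : ℕ) : cf N n 0 = 0 := by
  simp [cf]

theorem step {N : ℕ} (r : ℚ[X]) (a : ℚ) (m : ℕ) (hm : m ≤ N)
    (hr : r = ∑ n ∈ Finset.range (N+1), cf N n r • Hq n) :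
    r + a • Hq m = ∑ n ∈ Finset.range (N+1), cf N n (r + a • Hq m) • Hq n := by
  have hc : ∀ n, cf N n (r + a • Hq m) = cf N n r + a * (if n = m then 1 else 0) := by
    intro n; rw [cf_add, cf_smul, cf_Hq hm]
  simp only [hc, add_smul, Finset.sum_add_distrib]
  rw [← hr]
  congr 1
  rw [Finset.sum_eq_single_of_mem m (Finset.mem_range.mpr (by omega))]
  · simp
  · intro n _ hn
    simp [hn]

theorem expansion (N : ℕ) : ∀ d : ℕ, ∀ p : ℚ[X], p.natDegree ≤ d → p.natDegree ≤ N →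
    p = ∑ n ∈ Finset.range (N+1), cf N n p • Hq n := by
  intro d
  induction d with
  | zero =>
    intro p h0 hN
    have hz : (0:ℚ[X]) = ∑ n ∈ Finset.range (N+1), cf N n 0 • Hq n := by
      simp [cf_zero]
    have hp : p = 0 + p.coeff 0 • Hq 0 := by
      rw [zero_add, Hq, hermite_zero, Polynomial.map_C, map_one, Polynomial.smul_C,
        smul_eq_mul, mul_one]
      conv_lhs => rw [Polynomial.eq_C_of_natDegree_le_zero h0]
    rw [hp]
    exact step 0 (p.coeff 0) 0 (by omega) hz
  | succ d ih =>
    intro p h0 hN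
    by_cases hd : p.natDegree ≤ d
    · exact ih p hd hN
    · have hdeg : p.natDegree = d + 1 := by omega
      set a := p.leadingCoeff with ha
      set r := p - a • Hq (d+1) with hrdef
      have hHc : ∀ k, (Hq (d+1)).coeff k = ((hermite (d+1)).coeff k : ℚ) := by
        intro k; rw [Hq, Polynomial.coeff_map]; simp
      have hrd : r.natDegree ≤ d := by
        apply Polynomial.natDegree_le_iff_coeff_eq_zero.mpr
        intro k hk
        rcases eq_or_lt_of_le (Nat.succ_le_of_lt hk) with hk1 | hk1
        · rw [hrdef]
          simp only [Polynomial.coeff_sub, Polynomial.coeff_smul, smul_eq_mul]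
          rw [← hk1, hHc, coeff_hermite_self]
          have : p.coeff (d+1) = a := by
            rw [ha, Polynomial.leadingCoeff, hdeg]
          rw [this]; push_cast; ring
        · rw [hrdef]
          simp only [Polynomial.coeff_sub, Polynomial.coeff_smul, smul_eq_mul]
          rw [hHc, coeff_hermite_of_lt (by omega),
            Polynomial.coeff_eq_zero_of_natDegree_lt (by omega)]
          push_cast; ring
      have hr := ih r hrd (by omega)
      have hp : p = r + a • Hq (d+1) := by rw [hrdef]; ring
      rw [hp]
      exact step r a (d+1) (by omega) hr


theorem hermite_expansion_of_polynomial (p : ℚ[X]) :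
    p = ∑ n ∈ Finset.range (p.natDegree + 1),
      ((1 / (n.factorial : ℚ)) *
        ∑ j ∈ Finset.range (p.natDegree + 1),
          (1 / ((2:ℚ) ^ j * (j.factorial : ℚ))) *
            (Polynomial.derivative^[n + 2 * j] p).eval 0) •
        ((Polynomial.hermite n).map (algebraMap ℤ ℚ)) := by
  exact expansion p.natDegree p.natDegree p le_rfl le_rfl
end

section
/- Let g : PowerSeries ℚ have constant coefficient 0, and for each n define the polynomial p n : ℚ[X] by p n = n! • Σ_{j=0}^{n} ((PowerSeries.coeff ℚ n (g^j)) / j!) • X^j (so that Σ_n p_n(x) y^n/n! = exp(x g(y))). Then for every n and all x, z : ℚ, (p n).eval (x + z) = Σ_{k=0}^{n} (n.choose k : ℚ) * (p k).eval x * (p (n-k)).eval z. -/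
open Polynomial Finset

private lemma tri_sum (n : ℕ) (F : ℕ → ℕ → ℚ) :
    (∑ a ∈ range (n+1), ∑ b ∈ range (n+1-a), F a b)
      = ∑ j ∈ range (n+1), ∑ a ∈ range (j+1), F a (j-a) := by
  rw [Finset.sum_sigma', Finset.sum_sigma']
  refine Finset.sum_nbij' (fun x => ⟨x.1 + x.2, x.1⟩) (fun x => ⟨x.2, x.1 - x.2⟩)
    ?_ ?_ ?_ ?_ ?_
  · simp only [mem_sigma, mem_range]; omega
  · simp only [mem_sigma, mem_range]; omega
  · intro x hx
    simp only [mem_sigma, mem_range] at hx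
    ext <;> simp
  · intro x hx
    simp only [mem_sigma, mem_range] at hx
    ext <;> simp <;> omega
  · intro x hx
    simp

theorem binomial_type_of_generating_function (g : PowerSeries ℚ)
    (hg : PowerSeries.constantCoeff g = 0)
    (p : ℕ → ℚ[X])
    (hp : ∀ n : ℕ, p n = n.factorial •
      ∑ j ∈ Finset.range (n + 1),
        ((PowerSeries.coeff n (g ^ j)) / (j.factorial : ℚ)) • X ^ j) :
    ∀ (n : ℕ) (x z : ℚ), (p n).eval (x + z) =
      ∑ k ∈ Finset.range (n + 1),
        (n.choose k : ℚ) * (p k).eval x * (p (n - k)).eval z := by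
  -- vanishing of low coefficients of g^j
  have hvan : ∀ j m : ℕ, m < j → PowerSeries.coeff m (g ^ j) = 0 := by
    intro j m hmj
    obtain ⟨f, hf⟩ := PowerSeries.X_dvd_iff.mpr hg
    rw [hf, mul_pow, mul_comm, PowerSeries.coeff_mul_X_pow', if_neg (by omega)]
  -- evaluation formula
  have heval : ∀ (m : ℕ) (x : ℚ), (p m).eval x
      = (m.factorial : ℚ) * ∑ j ∈ range (m+1), PowerSeries.coeff m (g ^ j) * x ^ j / j.factorial := by
    intro m x
    rw [hp m]
    simp only [eval_smul, eval_finset_sum, eval_pow, eval_X, smul_eq_mul, nsmul_eq_mul,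
      Finset.mul_sum]
    exact Finset.sum_congr rfl fun i _ => by
      simp only [eval_smul, eval_mul, eval_natCast, eval_pow, eval_X, smul_eq_mul]; ring
  intro n x z
  set c : ℕ → ℕ → ℚ := fun j m => PowerSeries.coeff m (g ^ j) with hc
  set Q : ℕ → ℚ → ℚ := fun m x => ∑ j ∈ range (n+1), c j m * x ^ j / j.factorial with hQ
  -- extended evaluation formula
  have heval' : ∀ m : ℕ, m ≤ n → ∀ x : ℚ, (p m).eval x = (m.factorial : ℚ) * Q m x := by
    intro m hm x
    rw [heval m x, hQ]
    congr 1
    refine Finset.sum_subset (by intro t ht; simp only [mem_range] at *; omega) ?_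
    intro t ht hts
    simp only [mem_range] at ht hts
    rw [hvan t m (by omega), zero_mul, zero_div]
  -- the square sum
  set S : ℚ := ∑ a ∈ range (n+1), ∑ b ∈ range (n+1),
      (x ^ a / a.factorial) * (z ^ b / b.factorial) * c (a+b) n with hS
  -- Claim A : RHS-sum equals S
  have claimA : (∑ k ∈ range (n+1), Q k x * Q (n-k) z) = S := by
    have key : ∀ a b : ℕ, (∑ k ∈ range (n+1), c a k * c b (n-k)) = c (a+b) n := by
      intro a b
      simp only [hc]
      rw [pow_add, PowerSeries.coeff_mul,
        Finset.Nat.sum_antidiagonal_eq_sum_range_succ_mk]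
    calc (∑ k ∈ range (n+1), Q k x * Q (n-k) z)
        = ∑ k ∈ range (n+1), ∑ a ∈ range (n+1), ∑ b ∈ range (n+1),
            (x ^ a / a.factorial) * (z ^ b / b.factorial) * (c a k * c b (n-k)) := by
          refine Finset.sum_congr rfl fun k _ => ?_
          rw [hQ]; simp only
          rw [Finset.sum_mul_sum]
          refine Finset.sum_congr rfl fun a _ => Finset.sum_congr rfl fun b _ => ?_
          field_simp
      _ = ∑ a ∈ range (n+1), ∑ b ∈ range (n+1),
            (x ^ a / a.factorial) * (z ^ b / b.factorial) * (∑ k ∈ range (n+1), c a k * c b (n-k)) := by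
          rw [Finset.sum_comm]
          refine Finset.sum_congr rfl fun a _ => ?_
          rw [Finset.sum_comm]
          refine Finset.sum_congr rfl fun b _ => ?_
          rw [Finset.mul_sum]
      _ = S := by
          rw [hS]
          refine Finset.sum_congr rfl fun a _ => Finset.sum_congr rfl fun b _ => ?_
          rw [key]
  -- Claim B : Q n (x+z) = S
  have claimB : Q n (x+z) = S := by
    rw [hS]
    have shrink : S = ∑ a ∈ range (n+1), ∑ b ∈ range (n+1-a),
        (x ^ a / a.factorial) * (z ^ b / b.factorial) * c (a+b) n := by
      rw [hS]
      refine Finset.sum_congr rfl fun a ha => ?_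
      simp only [mem_range] at ha
      refine (Finset.sum_subset (by intro t ht; simp only [mem_range] at *; omega) ?_).symm
      intro t ht hts
      simp only [mem_range] at ht hts
      simp only [hc]
      rw [hvan (a+t) n (by omega), mul_zero]
    rw [← hS, shrink, tri_sum n (fun a b => (x ^ a / a.factorial) * (z ^ b / b.factorial) * c (a+b) n)]
    rw [hQ]; simp only
    refine Finset.sum_congr rfl fun j hj => ?_
    simp only [mem_range] at hj
    rw [add_pow, Finset.mul_sum, Finset.sum_div]
    refine Finset.sum_congr rfl fun a ha => ?_
    simp only [mem_range] at ha
    have hfac : (j.choose a : ℚ) * a.factorial * (j - a).factorial = j.factorial := by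
      exact_mod_cast congrArg (Nat.cast : ℕ → ℚ)
        (Nat.choose_mul_factorial_mul_factorial (by omega))
    have h1 : (a.factorial : ℚ) ≠ 0 := Nat.cast_ne_zero.mpr (Nat.factorial_ne_zero a)
    have h2 : ((j-a).factorial : ℚ) ≠ 0 := Nat.cast_ne_zero.mpr (Nat.factorial_ne_zero _)
    have h3 : (j.factorial : ℚ) ≠ 0 := Nat.cast_ne_zero.mpr (Nat.factorial_ne_zero j)
    have h4 : (j.choose a : ℚ) ≠ 0 :=
      Nat.cast_ne_zero.mpr (Nat.choose_pos (by omega : a ≤ j)).ne'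
    have : a + (j - a) = j := by omega
    rw [this, ← hfac]
    field_simp
  -- finish
  rw [heval' n le_rfl, claimB, ← claimA, Finset.mul_sum]
  refine Finset.sum_congr rfl fun k hk => ?_
  simp only [mem_range] at hk
  rw [heval' k (by omega), heval' (n-k) (by omega)]
  have hfac : (n.choose k : ℚ) * k.factorial * (n - k).factorial = n.factorial := by
    exact_mod_cast congrArg (Nat.cast : ℕ → ℚ)
      (Nat.choose_mul_factorial_mul_factorial (by omega : k ≤ n))
  rw [← hfac]
  ring
end

section
/- Let g, h : PowerSeries ℚ with the constant coefficient of g equal to 0. Define p n = n! • Σ_{j=0}^{n} ((PowerSeries.coeff ℚ n (g^j))/j!) • X^j and s n = n! • Σ_{j=0}^{n} ((PowerSeries.coeff ℚ n (h * g^j))/j!) • X^j in ℚ[X]. Then for every n, s n = Σ_{k=0}^{n} (n.choose k : ℚ) * ((s k).eval 0) • p (n-k). -/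
open Polynomial Finset

theorem sheffer_decomposition_over_associated (g h : PowerSeries ℚ)
    (hg : PowerSeries.constantCoeff g = 0)
    (p s : ℕ → ℚ[X])
    (hp : ∀ n : ℕ, p n = n.factorial •
      ∑ j ∈ Finset.range (n + 1),
        ((PowerSeries.coeff n (g ^ j)) / (j.factorial : ℚ)) • X ^ j)
    (hs : ∀ n : ℕ, s n = n.factorial •
      ∑ j ∈ Finset.range (n + 1),
        ((PowerSeries.coeff n (h * g ^ j)) / (j.factorial : ℚ)) • X ^ j) :
    ∀ n : ℕ, s n = ∑ k ∈ Finset.range (n + 1),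
      ((n.choose k : ℚ) * (s k).eval 0) • p (n - k) := by
  intro n
  obtain ⟨c, hc⟩ : (PowerSeries.X : PowerSeries ℚ) ∣ g := PowerSeries.X_dvd_iff.mpr hg
  have hgpow : ∀ j m : ℕ, m < j → PowerSeries.coeff m (g ^ j) = 0 := by
    intro j m hmj
    rw [hc, mul_pow, mul_comm, PowerSeries.coeff_mul_X_pow', if_neg (by omega)]
  have heval : ∀ k : ℕ, (s k).eval 0 = (k.factorial : ℚ) * PowerSeries.coeff k h := by
    intro k
    rw [hs k]
    rw [smul_sum, eval_finset_sum]
    rw [Finset.sum_eq_single_of_mem 0 (Finset.mem_range.mpr (Nat.succ_pos k))]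
    · simp [mul_comm]
    · intro j hj hj0
      simp [zero_pow hj0]
  -- rewrite the RHS
  have key : ∀ k ∈ Finset.range (n + 1),
      ((n.choose k : ℚ) * (s k).eval 0) • p (n - k)
        = ∑ j ∈ Finset.range (n + 1),
            ((n.factorial : ℚ) * (PowerSeries.coeff k h *
              PowerSeries.coeff (n - k) (g ^ j)) / (j.factorial : ℚ)) • X ^ j := by
    intro k hk
    have hkn : k ≤ n := Nat.lt_succ_iff.mp (Finset.mem_range.mp hk)
    rw [heval k, hp (n - k), ← Nat.cast_smul_eq_nsmul ℚ, smul_sum, smul_sum]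
    rw [Finset.sum_subset (Finset.range_subset_range.mpr (by omega : n - k + 1 ≤ n + 1))]
    · apply Finset.sum_congr rfl
      intro j hj
      rw [smul_smul, smul_smul]
      congr 1
      have hfac : (n.choose k : ℚ) * (k.factorial : ℚ) * ((n - k).factorial : ℚ)
          = (n.factorial : ℚ) := by
        rw [← Nat.cast_mul, ← Nat.cast_mul, Nat.choose_mul_factorial_mul_factorial hkn]
      rw [← hfac]
      ring
    · intro j hj hj'
      have : n - k < j := by
        simp only [Finset.mem_range] at hj hj' ⊢
        omega
      rw [hgpow j (n - k) this]
      simp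
  rw [Finset.sum_congr rfl key, Finset.sum_comm, hs n, ← Nat.cast_smul_eq_nsmul ℚ, smul_sum]
  apply Finset.sum_congr rfl
  intro j hj
  rw [← Finset.sum_smul, smul_smul]
  congr 1
  rw [PowerSeries.coeff_mul, Finset.Nat.sum_antidiagonal_eq_sum_range_succ_mk,
    Finset.sum_div, Finset.mul_sum]
  exact Finset.sum_congr rfl fun k hk => by ring
end

section
/- Let f, g : PowerSeries ℚ with PowerSeries.constantCoeff f = 0, PowerSeries.coeff 1 f ≠ 0 (f is a delta series), and PowerSeries.constantCoeff g ≠ 0 (so g is a unit). Then for every h : PowerSeries ℚ there exists a unique sequence c : ℕ → ℚ such that for every N, PowerSeries.coeff N h = Σ_{n=0}^{N} c n * PowerSeries.coeff N (g⁻¹ * f^n); that is, h = Σ_n c_n g⁻¹ f^n as a convergent sum of power series. -/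
open Finset

/-- Recursive solution of a lower-triangular system. -/
noncomputable def triSolve (M : ℕ → ℕ → ℚ) (t : ℕ → ℚ) : ℕ → ℚ
  | N => (t N - ∑ n ∈ (Finset.range N).attach, triSolve M t n * M N n) / M N N
decreasing_by exact Finset.mem_range.mp n.2

lemma triSolve_def (M : ℕ → ℕ → ℚ) (t : ℕ → ℚ) (N : ℕ) :
    triSolve M t N = (t N - ∑ n ∈ Finset.range N, triSolve M t n * M N n) / M N N := by
  rw [triSolve]
  congr 1
  rw [← Finset.sum_attach (Finset.range N) (fun n => triSolve M t n * M N n)]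

lemma tri_unique (M : ℕ → ℕ → ℚ) (hM : ∀ N, M N N ≠ 0) (t : ℕ → ℚ) :
    ∃! c : ℕ → ℚ, ∀ N : ℕ, t N = ∑ n ∈ Finset.range (N + 1), c n * M N n := by
  refine ⟨triSolve M t, ?_, ?_⟩
  · intro N
    rw [Finset.sum_range_succ, triSolve_def M t N, div_mul_cancel₀ _ (hM N)]
    ring
  · intro c hc
    funext N
    induction N using Nat.strong_induction_on with
    | _ N ih =>
      have h1 := hc N
      rw [Finset.sum_range_succ] at h1
      have h2 : ∑ n ∈ Finset.range N, c n * M N n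
          = ∑ n ∈ Finset.range N, triSolve M t n * M N n := by
        apply Finset.sum_congr rfl
        intro n hn
        rw [ih n (Finset.mem_range.mp hn)]
      rw [triSolve_def M t N, ← h2, eq_div_iff (hM N)]
      linarith [h1]

theorem expansion_theorem_power_series (f g : PowerSeries ℚ)
    (hf0 : PowerSeries.constantCoeff f = 0)
    (hf1 : PowerSeries.coeff 1 f ≠ 0)
    (hg : PowerSeries.constantCoeff g ≠ 0) :
    ∀ h : PowerSeries ℚ, ∃! c : ℕ → ℚ, ∀ N : ℕ,
      PowerSeries.coeff N h =
        ∑ n ∈ Finset.range (N + 1), c n * PowerSeries.coeff N (g⁻¹ * f ^ n) := by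
  -- coeff k (f^n) = 0 for k < n
  have hlow : ∀ n k : ℕ, k < n → PowerSeries.coeff k (f ^ n) = 0 := by
    intro n
    induction n with
    | zero => intro k hk; omega
    | succ n ih =>
      intro k hk
      rw [pow_succ, mul_comm, PowerSeries.coeff_mul]
      apply Finset.sum_eq_zero
      intro p hp
      rcases Finset.HasAntidiagonal.mem_antidiagonal.mp hp with h
      rcases Nat.eq_zero_or_pos p.1 with h0 | h0
      · have : p.1 = 0 := h0
        simp [this, PowerSeries.coeff_zero_eq_constantCoeff, hf0]
      · have : p.2 < n := by omega
        rw [ih p.2 this, mul_zero]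
  -- coeff n (f^n) = (coeff 1 f)^n
  have hdiag : ∀ n : ℕ, PowerSeries.coeff n (f ^ n) = (PowerSeries.coeff 1 f) ^ n := by
    intro n
    induction n with
    | zero => simp
    | succ n ih =>
      rw [pow_succ, mul_comm, PowerSeries.coeff_mul]
      rw [Finset.sum_eq_single (1, n)]
      · rw [ih, pow_succ]; ring
      · intro p hp hne
        rcases Finset.HasAntidiagonal.mem_antidiagonal.mp hp with h
        rcases Nat.eq_zero_or_pos p.1 with h0 | h0
        · simp [h0, PowerSeries.coeff_zero_eq_constantCoeff, hf0]
        · have : p.2 < n := by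
            rcases Nat.lt_or_ge p.2 n with h2 | h2
            · exact h2
            · exfalso; apply hne
              have : p.2 = n := by omega
              have : p.1 = 1 := by omega
              exact Prod.ext ‹p.1 = 1› ‹p.2 = n›
          rw [hlow n p.2 this, mul_zero]
      · intro hmem
        exfalso; apply hmem
        exact Finset.HasAntidiagonal.mem_antidiagonal.mpr (by omega)
  -- coeff N (g⁻¹ * f^N) ≠ 0
  have hMdiag : ∀ N : ℕ, PowerSeries.coeff N (g⁻¹ * f ^ N) ≠ 0 := by
    intro N
    rw [PowerSeries.coeff_mul, Finset.sum_eq_single (0, N)]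
    · rw [PowerSeries.coeff_zero_eq_constantCoeff, PowerSeries.constantCoeff_inv, hdiag]
      exact mul_ne_zero (inv_ne_zero hg) (pow_ne_zero _ hf1)
    · intro p hp hne
      rcases Finset.HasAntidiagonal.mem_antidiagonal.mp hp with h
      have : p.2 < N := by
        rcases Nat.lt_or_ge p.2 N with h2 | h2
        · exact h2
        · exfalso; apply hne
          have h2' : p.2 = N := by omega
          have h1' : p.1 = 0 := by omega
          exact Prod.ext h1' h2'
      rw [hlow N p.2 this, mul_zero]
    · intro hmem
      exfalso; apply hmem
      exact Finset.HasAntidiagonal.mem_antidiagonal.mpr (by omega)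
  intro h
  exact tri_unique (fun N n => PowerSeries.coeff N (g⁻¹ * f ^ n)) hMdiag
    (fun N => PowerSeries.coeff N h)
end

section
/- Fix b : ℕ and x : ℚ. In the ring PowerSeries ℚ, let u = -(PowerSeries.X * (1 - PowerSeries.X)⁻¹) (the power series y/(y-1), which has constant coefficient 0). Then (1 - PowerSeries.X)⁻¹^(b+1) * PowerSeries.subst (PowerSeries.C ℚ x * u) (PowerSeries.exp ℚ) equals PowerSeries.mk (fun n => Σ_{j=0}^{n} ((n+b).choose (n-j) : ℚ) * (-x)^j / j!); that is, Σ_{n≥0} L_n^{(b)}(x) y^n = (1-y)^{-b-1} exp(x y/(y-1)), where L_n^{(b)}(x) = Σ_{j=0}^n C(n+b, n-j) (-x)^j / j! is the generalized Laguerre polynomial of degree n and order b. -/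
open Finset

/-- Substitution of a power series `u` (meant to have zero constant coefficient)
into a power series `f`: the coefficient of degree `n` in `f(u)` is
`∑_{j ≤ n} (coeff j f) * (coeff n (u ^ j))`, which is the full sum
`∑_j (coeff j f) * coeff n (u ^ j)` since `coeff n (u ^ j) = 0` for `j > n`
when `u` has zero constant coefficient. -/
noncomputable def PowerSeries.substitute (u f : PowerSeries ℚ) : PowerSeries ℚ :=
  PowerSeries.mk fun n =>
    ∑ j ∈ Finset.range (n + 1), PowerSeries.coeff j f * PowerSeries.coeff n (u ^ j)

lemma geo : ((1 - PowerSeries.X : PowerSeries ℚ)⁻¹) = PowerSeries.mk fun _ => (1 : ℚ) := by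
  rw [PowerSeries.inv_eq_iff_mul_eq_one]
  · ext n
    rw [mul_sub, mul_one]
    cases n with
    | zero => simp
    | succ m =>
      simp [PowerSeries.coeff_succ_mul_X]
  · simp

lemma hsumnat (j : ℕ) : ∀ m : ℕ, ∑ k ∈ Finset.range (m + 1), (k + j - 1).choose k = (m + j).choose m := by
  intro m
  induction m with
  | zero => simp
  | succ m ih =>
    rw [Finset.sum_range_succ, ih]
    have h1 : m + 1 + j - 1 = m + j := by omega
    rw [h1]
    have h2 : m + 1 + j = (m + j) + 1 := by ring
    rw [h2, Nat.choose_succ_succ]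

lemma hinv (j : ℕ) : ∀ m : ℕ, PowerSeries.coeff m (((1 - PowerSeries.X : PowerSeries ℚ)⁻¹) ^ j)
    = ((m + j - 1).choose m : ℚ) := by
  induction j with
  | zero =>
    intro m
    cases m with
    | zero => simp
    | succ m => simp [Nat.choose_eq_zero_of_lt (by omega : m + 1 + 0 - 1 < m + 1)]
  | succ j ih =>
    intro m
    rw [pow_succ, PowerSeries.coeff_mul, Finset.Nat.sum_antidiagonal_eq_sum_range_succ_mk]
    simp only [ih]
    simp only [geo, PowerSeries.coeff_mk, mul_one]
    rw [← Nat.cast_sum, hsumnat j m]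
    have h3 : m + (j + 1) - 1 = m + j := by omega
    rw [h3]

theorem laguerre_generating_function (b : ℕ) (x : ℚ) :
    ((1 - PowerSeries.X : PowerSeries ℚ)⁻¹) ^ (b + 1) *
      PowerSeries.substitute
        (PowerSeries.C x * (-(PowerSeries.X * (1 - PowerSeries.X)⁻¹)))
        (PowerSeries.exp ℚ) =
    PowerSeries.mk (fun n =>
      ∑ j ∈ Finset.range (n + 1),
        ((n + b).choose (n - j) : ℚ) * (-x) ^ j / (j.factorial : ℚ)) := by
  set iv := ((1 - PowerSeries.X : PowerSeries ℚ)⁻¹) with hivdef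
  set u := PowerSeries.C x * (-(PowerSeries.X * iv)) with hu
  have hvan : ∀ j k : ℕ, k < j → PowerSeries.coeff k (u ^ j) = 0 := by
    intro j k hk
    have hdvd : (PowerSeries.X : PowerSeries ℚ) ^ j ∣ u ^ j :=
      pow_dvd_pow_of_dvd ⟨-(PowerSeries.C x * iv), by rw [hu]; ring⟩ j
    exact (PowerSeries.X_pow_dvd_iff.mp hdvd) k hk
  ext n
  rw [PowerSeries.coeff_mul, PowerSeries.coeff_mk]
  have hsub : ∀ p ∈ Finset.HasAntidiagonal.antidiagonal n,
      PowerSeries.coeff p.1 (iv ^ (b+1)) * PowerSeries.coeff p.2 (PowerSeries.substitute u (PowerSeries.exp ℚ))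
      = PowerSeries.coeff p.1 (iv ^ (b+1)) *
        ∑ j ∈ Finset.range (n + 1), PowerSeries.coeff j (PowerSeries.exp ℚ) * PowerSeries.coeff p.2 (u ^ j) := by
    intro p hp
    congr 1
    rw [PowerSeries.substitute, PowerSeries.coeff_mk]
    apply Finset.sum_subset
    · apply Finset.range_subset_range.mpr
      have := (Finset.HasAntidiagonal.mem_antidiagonal.mp hp)
      omega
    · intro j hj hnot
      rw [hvan j p.2 (by simp only [Finset.mem_range] at hnot; omega), mul_zero]
  rw [Finset.sum_congr rfl hsub]
  have step : (∑ p ∈ Finset.HasAntidiagonal.antidiagonal n, PowerSeries.coeff p.1 (iv ^ (b+1)) *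
        ∑ j ∈ Finset.range (n + 1), PowerSeries.coeff j (PowerSeries.exp ℚ) * PowerSeries.coeff p.2 (u ^ j))
      = ∑ j ∈ Finset.range (n + 1), PowerSeries.coeff j (PowerSeries.exp ℚ) *
          PowerSeries.coeff n (iv ^ (b+1) * u ^ j) := by
    calc _ = ∑ p ∈ Finset.HasAntidiagonal.antidiagonal n, ∑ j ∈ Finset.range (n + 1),
            PowerSeries.coeff j (PowerSeries.exp ℚ) *
              (PowerSeries.coeff p.1 (iv ^ (b+1)) * PowerSeries.coeff p.2 (u ^ j)) := by
          refine Finset.sum_congr rfl fun p _ => ?_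
          rw [Finset.mul_sum]
          exact Finset.sum_congr rfl fun j _ => by ring
      _ = ∑ j ∈ Finset.range (n + 1), ∑ p ∈ Finset.HasAntidiagonal.antidiagonal n,
            PowerSeries.coeff j (PowerSeries.exp ℚ) *
              (PowerSeries.coeff p.1 (iv ^ (b+1)) * PowerSeries.coeff p.2 (u ^ j)) :=
          Finset.sum_comm
      _ = _ := by
          refine Finset.sum_congr rfl fun j _ => ?_
          rw [PowerSeries.coeff_mul, Finset.mul_sum]
  rw [step]
  refine Finset.sum_congr rfl fun j hj => ?_
  have hjn : j ≤ n := by simp only [Finset.mem_range] at hj; omega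
  have hre : iv ^ (b+1) * u ^ j
      = PowerSeries.C ((-x) ^ j) * (PowerSeries.X ^ j * iv ^ (b+1+j)) := by
    rw [hu, map_pow, map_neg, pow_add]
    ring
  rw [hre, PowerSeries.coeff_C_mul, PowerSeries.coeff_X_pow_mul', if_pos hjn, hinv]
  have harg : n - j + (b + 1 + j) - 1 = n + b := by omega
  rw [harg, PowerSeries.coeff_exp, Algebra.algebraMap_self, RingHom.id_apply]
  have hfac : (j.factorial : ℚ) ≠ 0 := Nat.cast_ne_zero.mpr j.factorial_ne_zero
  field_simp
end
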